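/- arXiv:1612.00617 — 8 statements merged into one kernel-verified Lean document; each statement's English description precedes it below -/
import Mathlib

section
/- For all real x with 0 ≤ x ≤ 1/10 and all real q with 1/7 ≤ q ≤ 1/4, we have (1-x)^q ≥ 1 - (21/20)·q·x. -/
open scoped Classical

/-- The closed anchored axis-parallel box `[0,a_1] × ⋯ × [0,a_d]`. -/
def anchoredBox (d : ℕ) (a : Fin d → ℝ) : Set (Fin d → ℝ) :=
  {y | ∀ j, 0 ≤ y j ∧ y j ≤ a j}

/-- The star-discrepancy of the points `x 1, …, x n` in `[0,1]^d`. -/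
noncomputable def starD (d n : ℕ) (x : Fin n → Fin d → ℝ) : ℝ :=
  sSup {t : ℝ | ∃ a : Fin d → ℝ, (∀ j, a j ∈ Set.Icc (0:ℝ) 1) ∧
    t = |((Finset.univ.filter (fun k => x k ∈ anchoredBox d a)).card : ℝ) / n - ∏ j, a j|}

/-- The number of distinct subsets of `{x 1, …, x n}` cut out by anchored boxes. -/
noncomputable def interCount (d n : ℕ) (x : Fin n → Fin d → ℝ) : ℕ :=
  Set.ncard {P : Set (Fin d → ℝ) | ∃ a : Fin d → ℝ,
    (∀ j, a j ∈ Set.Icc (0:ℝ) 1) ∧ P = anchoredBox d a ∩ Set.range x}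

/-- The number of points lying on the right upper boundary of the box `[0,a]`. -/
noncomputable def boundaryCount (d n : ℕ) (x : Fin n → Fin d → ℝ) (a : Fin d → ℝ) : ℕ :=
  (Finset.univ.filter (fun k => x k ∈ anchoredBox d a ∧ ∃ j, x k j = a j)).card

theorem reverse_bernoulli (x q : ℝ) (hx0 : 0 ≤ x) (hx1 : x ≤ 1/10)
    (hq1 : 1/7 ≤ q) (hq2 : q ≤ 1/4) :
    (1 - x) ^ q ≥ 1 - 21/20 * q * x := by
  have hq0 : (0:ℝ) < q := by linarith
  set M : ℝ := Real.log (10/9) with hMdef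
  have hlog : Real.log (9/10) = -M := by
    rw [hMdef, ← Real.log_inv]; norm_num
  have hM1 : (1:ℝ)/10 ≤ M := by
    have h := Real.log_le_sub_one_of_pos (show (0:ℝ) < 9/10 by norm_num)
    rw [hlog] at h; linarith
  have hM2 : M ≤ 19/180 := by
    have h1 : (11539:ℝ)/11520 ≤ Real.exp (19/11520) := by
      have := Real.add_one_le_exp ((19:ℝ)/11520); linarith
    have hpow : ((11539:ℝ)/11520)^(64:ℕ) ≤ Real.exp (19/180) := by
      calc ((11539:ℝ)/11520)^(64:ℕ) ≤ (Real.exp (19/11520))^(64:ℕ) := by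
            exact pow_le_pow_left₀ (by norm_num) h1 64
        _ = Real.exp (19/180) := by
            rw [← Real.exp_nsmul]; norm_num
    have h2 : (10:ℝ)/9 ≤ Real.exp (19/180) := by
      refine le_trans ?_ hpow
      norm_num
    calc M ≤ Real.log (Real.exp (19/180)) :=
          Real.log_le_log (by norm_num) h2
      _ = 19/180 := Real.log_exp _
  -- Step 1: (9/10)^q ≥ 1 - 21/200 * q
  have hE : ((9:ℝ)/10) ^ q ≥ 1 - 21/200 * q := by
    have hrw : ((9:ℝ)/10) ^ q = Real.exp (q * Real.log (9/10)) := by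
      rw [Real.rpow_def_of_pos (by norm_num)]; ring_nf
    have habs : |(-(q*M))| ≤ 1 := by
      rw [abs_neg, abs_of_nonneg (by positivity)]
      nlinarith
    have hb := Real.exp_bound habs (n := 3) (by norm_num)
    have hsum : ∑ m ∈ Finset.range 3, (-(q*M)) ^ m / (m.factorial : ℝ)
        = 1 - q*M + (q*M)^2/2 := by
      simp [Finset.sum_range_succ]
      ring
    rw [hsum] at hb
    have hb' : |Real.exp (-(q*M)) - (1 - q*M + (q*M)^2/2)| ≤ (q*M)^3 * (2/9) := by
      refine hb.trans_eq ?_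
      rw [abs_neg, abs_of_nonneg (by positivity)]
      push_cast
      norm_num [Nat.factorial]
      try ring
    have hexp : Real.exp (-(q*M)) ≥ 1 - q*M + (q*M)^2/2 - (q*M)^3 * (2/9) := by
      have := abs_le.mp hb'
      linarith [this.1]
    have heq : Real.exp (q * Real.log (9/10)) = Real.exp (-(q*M)) := by
      rw [hlog]; ring_nf
    rw [hrw, heq]
    have hfinal : 1 - q*M + (q*M)^2/2 - (q*M)^3 * (2/9) ≥ 1 - 21/200 * q := by
      nlinarith [sq_nonneg (q*M), sq_nonneg q, mul_pos hq0 (show (0:ℝ) < M by linarith),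
        mul_le_mul hq2 hM2 (by linarith) (by norm_num),
        mul_le_mul hq1 hM1 (by norm_num) (by linarith)]
    linarith
  -- Step 2: concavity of t ↦ t^q on [0,∞)
  have hconc := Real.concaveOn_rpow (le_of_lt hq0) (by linarith : q ≤ 1)
  have hkey := hconc.2 (Set.mem_Ici.mpr (show (0:ℝ) ≤ 9/10 by norm_num))
    (Set.mem_Ici.mpr (zero_le_one))
    (show (0:ℝ) ≤ 10*x by linarith) (show (0:ℝ) ≤ 1 - 10*x by linarith) (by ring)
  simp only [smul_eq_mul, Real.one_rpow, mul_one] at hkey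
  have harg : 10*x*(9/10) + (1 - 10*x) = 1 - x := by ring
  rw [harg] at hkey
  -- hkey : 10*x*(9/10)^q + (1-10*x) ≤ (1-x)^q
  nlinarith [mul_le_mul_of_nonneg_left hE (show (0:ℝ) ≤ 10*x by linarith)]
end

section
/- Let x_1,…,x_n be points in [0,1]^d (d ≥ 1) and suppose there exists a box A = [0,a_1]×…×[0,a_d] and a subset S of the points of cardinality at least m such that every point of S lies on the right upper boundary of A (i.e., each point y in S lies in A and has y^{(j)} = a_j for some coordinate j). Then the star-discrepancy D_n^*(x_1,…,x_n) ≥ m/(2n). -/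
open scoped Classical

lemma cardn (d n : ℕ) (x : Fin n → Fin d → ℝ) (b : Fin d → ℝ) :
    ((Finset.univ.filter (fun k => x k ∈ anchoredBox d b)).card : ℝ) / n ∈ Set.Icc (0:ℝ) 1 := by
  constructor
  · positivity
  · rcases Nat.eq_zero_or_pos n with h | h
    · subst h; simp
    · rw [div_le_one (by exact_mod_cast h)]
      exact_mod_cast (Finset.card_filter_le _ _).trans (by simp)

lemma abs_le_starD (d n : ℕ) (x : Fin n → Fin d → ℝ) (b : Fin d → ℝ)
    (hb : ∀ j, b j ∈ Set.Icc (0:ℝ) 1) :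
    |((Finset.univ.filter (fun k => x k ∈ anchoredBox d b)).card : ℝ) / n - ∏ j, b j|
      ≤ starD d n x := by
  apply le_csSup
  · refine ⟨1, ?_⟩
    rintro t ⟨c, hc, rfl⟩
    have h1 := cardn d n x c
    have h2 : (0:ℝ) ≤ ∏ j, c j := Finset.prod_nonneg (fun j _ => (hc j).1)
    have h3 : (∏ j, c j) ≤ 1 := Finset.prod_le_one (fun j _ => (hc j).1) (fun j _ => (hc j).2)
    rw [abs_sub_le_iff]
    constructor <;> linarith [h1.1, h1.2]
  · exact ⟨b, hb, rfl⟩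

theorem cheap_argument (d n m : ℕ) (hd : 1 ≤ d) (x : Fin n → Fin d → ℝ)
    (hx : ∀ k j, x k j ∈ Set.Icc (0:ℝ) 1)
    (a : Fin d → ℝ) (ha : ∀ j, a j ∈ Set.Icc (0:ℝ) 1)
    (S : Finset (Fin n)) (hcard : m ≤ S.card)
    (hS : ∀ k ∈ S, x k ∈ anchoredBox d a ∧ ∃ j, x k j = a j) :
    starD d n x ≥ (m : ℝ) / (2 * n) := by
  have hstar0 : 0 ≤ starD d n x := (abs_nonneg _).trans (abs_le_starD d n x a ha)
  -- notation
  set N := (Finset.univ.filter (fun k => x k ∈ anchoredBox d a)).card with hN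
  have hSsub : S ⊆ Finset.univ.filter (fun k => x k ∈ anchoredBox d a) := by
    intro k hk
    simp only [Finset.mem_filter, Finset.mem_univ, true_and]
    exact (hS k hk).1
  have hmN : m ≤ N := hcard.trans (Finset.card_le_card hSsub)
  rcases Nat.eq_zero_or_pos n with hn | hn
  · subst hn
    have : m = 0 := Nat.le_zero.mp (hcard.trans (by simpa using Finset.card_le_univ S))
    subst this
    simpa using hstar0
  have hn' : (0:ℝ) < n := by exact_mod_cast hn
  by_cases hz : ∃ j, a j = 0
  · -- volume zero case
    obtain ⟨j0, hj0⟩ := hz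
    have hP : (∏ j, a j) = 0 := Finset.prod_eq_zero (Finset.mem_univ j0) hj0
    have h1 : ((N : ℝ)) / n - ∏ j, a j ≤ starD d n x :=
      (le_abs_self _).trans (abs_le_starD d n x a ha)
    rw [hP, sub_zero] at h1
    have h2 : (m:ℝ)/n ≤ (N:ℝ)/n := by
      have hmN' : (m:ℝ) ≤ (N:ℝ) := by exact_mod_cast hmN
      gcongr
    have h3 : (m:ℝ)/(2*n) ≤ (m:ℝ)/n := by
      rw [div_le_div_iff₀ (by positivity) hn']
      nlinarith [Nat.cast_nonneg (α := ℝ) m]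
    linarith
  · push_neg at hz
    have haj : ∀ j, 0 < a j := fun j => lt_of_le_of_ne (ha j).1 (fun h => hz j h.symm)
    -- min of a
    have hdne : (Finset.univ : Finset (Fin d)).Nonempty := by
      haveI : Nonempty (Fin d) := ⟨⟨0, hd⟩⟩
      exact Finset.univ_nonempty
    set ε0 := Finset.univ.inf' hdne a with hε0
    have hε0pos : 0 < ε0 := by
      rw [hε0, Finset.lt_inf'_iff]
      exact fun j _ => haj j
    -- key inequality for each ε in Ioc 0 ε0
    have key : ∀ ε ∈ Set.Ioc (0:ℝ) ε0,
        (m:ℝ)/n - ((∏ j, a j) - ∏ j, (a j - ε)) ≤ 2 * starD d n x := by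
      intro ε ⟨hε1, hε2⟩
      set b : Fin d → ℝ := fun j => a j - ε with hbdef
      have hεa : ∀ j, ε ≤ a j := fun j => hε2.trans (Finset.inf'_le _ (Finset.mem_univ j))
      have hb : ∀ j, b j ∈ Set.Icc (0:ℝ) 1 := fun j =>
        ⟨by simp [hbdef]; linarith [hεa j], by simp [hbdef]; linarith [(ha j).2]⟩
      set N' := (Finset.univ.filter (fun k => x k ∈ anchoredBox d b)).card with hN'
      -- filter b ⊆ filter a
      have hsub : Finset.univ.filter (fun k => x k ∈ anchoredBox d b) ⊆
          Finset.univ.filter (fun k => x k ∈ anchoredBox d a) := by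
        intro k hk
        simp only [Finset.mem_filter, Finset.mem_univ, true_and] at *
        exact fun j => ⟨(hk j).1, (hk j).2.trans (by show a j - ε ≤ a j; linarith)⟩
      -- disjoint from S
      have hdisj : Disjoint (Finset.univ.filter (fun k => x k ∈ anchoredBox d b)) S := by
        rw [Finset.disjoint_right]
        intro k hk hk'
        simp only [Finset.mem_filter, Finset.mem_univ, true_and] at hk'
        obtain ⟨j, hj⟩ := (hS k hk).2
        have := (hk' j).2
        simp only [hbdef] at this
        linarith
      have hcards : N' + m ≤ N := by
        calc N' + m ≤ N' + S.card := by omega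
        _ = (Finset.univ.filter (fun k => x k ∈ anchoredBox d b) ∪ S).card := by
              rw [Finset.card_union_of_disjoint hdisj]
        _ ≤ N := Finset.card_le_card (Finset.union_subset hsub hSsub)
      have h1 : ((N : ℝ)) / n - ∏ j, a j ≤ starD d n x :=
        (le_abs_self _).trans (abs_le_starD d n x a ha)
      have h2 : (∏ j, b j) - ((N' : ℝ)) / n ≤ starD d n x := by
        have := (abs_le_starD d n x b hb)
        calc (∏ j, b j) - ((N' : ℝ)) / n ≤ |((N' : ℝ))/n - ∏ j, b j| := by
              rw [abs_sub_comm]; exact le_abs_self _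
        _ ≤ _ := this
      have hcast : (m:ℝ) ≤ (N:ℝ) - (N':ℝ) := by
        have : (N':ℝ) + (m:ℝ) ≤ (N:ℝ) := by exact_mod_cast hcards
        linarith
      have hdiv : (m:ℝ)/n ≤ (N:ℝ)/n - (N':ℝ)/n := by
        rw [div_sub_div_same]
        gcongr
      have hpb : (∏ j, b j) = ∏ j, (a j - ε) := rfl
      linarith
    -- take limit ε → 0⁺
    have hcont : Filter.Tendsto (fun ε : ℝ => (m:ℝ)/n - ((∏ j, a j) - ∏ j, (a j - ε)))
        (nhdsWithin 0 (Set.Ioi 0)) (nhds ((m:ℝ)/n)) := by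
      have hc : Continuous (fun ε : ℝ => (m:ℝ)/n - ((∏ j, a j) - ∏ j, (a j - ε))) := by
        continuity
      have h := (hc.tendsto 0).mono_left (nhdsWithin_le_nhds (s := Set.Ioi 0))
      simpa using h
    have hev : ∀ᶠ ε in nhdsWithin 0 (Set.Ioi 0),
        (m:ℝ)/n - ((∏ j, a j) - ∏ j, (a j - ε)) ≤ 2 * starD d n x := by
      filter_upwards [Ioc_mem_nhdsGT_of_mem ⟨le_refl (0:ℝ), hε0pos⟩] with ε hε
      exact key ε hε
    have hlim : (m:ℝ)/n ≤ 2 * starD d n x := le_of_tendsto hcont hev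
    rw [ge_iff_le, div_le_iff₀ (by positivity)]
    rw [div_le_iff₀ hn'] at hlim
    linarith
end

section
/- Let x_1,…,x_n ∈ [0,1]^d with d ≥ 2 and n ≥ 2e·d², and set κ = 1 − 1/d. If for some coordinate j there is no point y among x_1,…,x_n with y^{(j)} > κ and y^{(k)} ≤ κ for all k ≠ j, then D_n^*(x_1,…,x_n) ≥ d/n. -/
open scoped Classical

/-! Two boxes `[0,κ]^d` and `[0,κ]^{j-1} × [0,1] × [0,κ]^{d-j}`, with `κ = 1 - 1/d`, contain the
same points when the face point is missing, yet their volumes differ by `κ^(d-1)/d ≥ 1/(e d)`.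
One of the two boxes therefore has local discrepancy at least `1/(2 e d) ≥ d/n`. -/

theorem one_le_exp_one_mul_one_sub_div_pow (d : ℕ) :
    1 ≤ Real.exp 1 * (1 - 1 / (d : ℝ)) ^ (d - 1) := by
  rcases d with _ | m
  · simp
  have hinv : ((1 - 1 / ((m + 1 : ℕ) : ℝ)) * (1 + (m : ℝ)⁻¹)) ^ m = 1 := by
    rcases eq_or_ne m 0 with rfl | hm
    · simp
    · rw [← one_pow m]; congr 1; field_simp; push_cast; ring
  calc (1 : ℝ) = (1 + (m : ℝ)⁻¹) ^ m * (1 - 1 / ((m + 1 : ℕ) : ℝ)) ^ m :=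
        hinv.symm.trans (by rw [mul_pow, mul_comm])
    _ ≤ Real.exp 1 * (1 - 1 / ((m + 1 : ℕ) : ℝ)) ^ (m + 1 - 1) := by
      rw [Nat.add_sub_cancel]
      gcongr
      · exact pow_nonneg (sub_nonneg.2 (div_le_one_of_le₀ (by simp) (by positivity))) _
      · exact Real.one_add_inv_pow_le_exp

theorem prod_update_one_sub_prod_const {ι R : Type*} [Fintype ι] [DecidableEq ι] [CommRing R]
    (c : R) (j : ι) :
    ∏ i, Function.update (fun _ => c) j 1 i - ∏ _i : ι, c = c ^ (Fintype.card ι - 1) * (1 - c) := by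
  rw [Finset.prod_update_of_mem (Finset.mem_univ j),
    ← Finset.mul_prod_erase _ _ (Finset.mem_univ j), Finset.sdiff_singleton_eq_erase,
    Finset.prod_const, Finset.card_erase_of_mem (Finset.mem_univ j), Finset.card_univ]
  ring

theorem mem_anchoredBox_update_one_iff {d : ℕ} {a y : Fin d → ℝ} {j : Fin d} (hy : y j ≤ 1)
    (hface : ¬ (y j > a j ∧ ∀ i, i ≠ j → y i ≤ a i)) :
    y ∈ anchoredBox d (Function.update a j 1) ↔ y ∈ anchoredBox d a := by
  refine ⟨fun h i => ⟨(h i).1, ?_⟩, fun h i => ⟨(h i).1, ?_⟩⟩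
  · have hother : ∀ i, i ≠ j → y i ≤ a i := fun i hi => by
      simpa [Function.update_of_ne hi] using (h i).2
    rcases eq_or_ne i j with rfl | hi
    · exact not_lt.1 fun hlt => hface ⟨hlt, hother⟩
    · exact hother i hi
  · rcases eq_or_ne i j with rfl | hi
    · simpa using hy
    · simpa [Function.update_of_ne hi] using (h i).2

theorem abs_card_div_sub_prod_le_starD {d n : ℕ} (x : Fin n → Fin d → ℝ) {a : Fin d → ℝ}
    (ha : ∀ j, a j ∈ Set.Icc (0:ℝ) 1) :
    |((Finset.univ.filter (fun k => x k ∈ anchoredBox d a)).card : ℝ) / n - ∏ j, a j|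
      ≤ starD d n x := by
  refine le_csSup ⟨1, ?_⟩ ⟨a, ha, rfl⟩
  rintro _ ⟨b, hb, rfl⟩
  have hcard : ((Finset.univ.filter (fun k => x k ∈ anchoredBox d b)).card : ℝ) ≤ n := by
    exact_mod_cast (Finset.card_filter_le _ _).trans_eq (Finset.card_fin n)
  have hfrac : ((Finset.univ.filter (fun k => x k ∈ anchoredBox d b)).card : ℝ) / n
      ∈ Set.Icc (0:ℝ) 1 :=
    ⟨by positivity, div_le_one_of_le₀ hcard (by positivity)⟩
  have hprod : ∏ j, b j ∈ Set.Icc (0:ℝ) 1 :=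
    ⟨Finset.prod_nonneg fun i _ => (hb i).1,
      Finset.prod_le_one (fun i _ => (hb i).1) fun i _ => (hb i).2⟩
  exact abs_sub_le_of_nonneg_of_le hfrac.1 hfrac.2 hprod.1 hprod.2

theorem abs_prod_sub_prod_le_two_mul_starD {d n : ℕ} (x : Fin n → Fin d → ℝ) {a b : Fin d → ℝ}
    (ha : ∀ j, a j ∈ Set.Icc (0:ℝ) 1) (hb : ∀ j, b j ∈ Set.Icc (0:ℝ) 1)
    (hsame : ∀ k, x k ∈ anchoredBox d a ↔ x k ∈ anchoredBox d b) :
    |∏ j, a j - ∏ j, b j| ≤ 2 * starD d n x := by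
  have hcount := abs_card_div_sub_prod_le_starD x hb
  rw [← Finset.filter_congr fun k _ => hsame k] at hcount
  set q := ((Finset.univ.filter (fun k => x k ∈ anchoredBox d a)).card : ℝ) / n
  calc |∏ j, a j - ∏ j, b j| ≤ |∏ j, a j - q| + |q - ∏ j, b j| := abs_sub_le _ _ _
    _ = |q - ∏ j, a j| + |q - ∏ j, b j| := by rw [abs_sub_comm (∏ j, a j)]
    _ ≤ starD d n x + starD d n x := add_le_add (abs_card_div_sub_prod_le_starD x ha) hcount
    _ = 2 * starD d n x := (two_mul _).symm

theorem missing_face_point_general (d n : ℕ) (hn : 2 * Real.exp 1 * d ^ 2 ≤ n)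
    (x : Fin n → Fin d → ℝ) (hx : ∀ k j, x k j ∈ Set.Icc (0:ℝ) 1)
    (j : Fin d)
    (hno : ¬ ∃ k : Fin n, x k j > 1 - 1/(d:ℝ) ∧ ∀ i : Fin d, i ≠ j → x k i ≤ 1 - 1/(d:ℝ)) :
    starD d n x ≥ (d : ℝ) / n := by
  set κ : ℝ := 1 - 1 / (d : ℝ)
  have hd : (0 : ℝ) < d := Nat.cast_pos.2 j.pos
  have hn0 : (0 : ℝ) < n := lt_of_lt_of_le (by positivity) hn
  have hκ : κ ∈ Set.Icc (0 : ℝ) 1 :=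
    ⟨sub_nonneg.2 (div_le_one_of_le₀ (by exact_mod_cast j.pos) hd.le), sub_le_self _ (by positivity)⟩
  have hgap := abs_prod_sub_prod_le_two_mul_starD x (n := n)
    (a := Function.update (fun _ => κ) j 1) (b := fun _ => κ)
    (fun i => by
      rcases eq_or_ne i j with rfl | h
      · simp
      · rw [Function.update_of_ne h]; exact hκ)
    (fun _ => hκ) (fun k => mem_anchoredBox_update_one_iff (hx k j).2 fun h => hno ⟨k, h⟩)
  have hvol : 0 ≤ κ ^ (d - 1) * (1 / d) := by have := hκ.1; positivity
  rw [prod_update_one_sub_prod_const, Fintype.card_fin, sub_sub_cancel, abs_of_nonneg hvol] at hgap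
  rw [ge_iff_le, div_le_iff₀ hn0]
  calc (d : ℝ) ≤ d * (Real.exp 1 * κ ^ (d - 1)) :=
        le_mul_of_one_le_right hd.le (one_le_exp_one_mul_one_sub_div_pow d)
    _ = 2 * Real.exp 1 * d ^ 2 * (κ ^ (d - 1) * (1 / d)) / 2 := by field_simp
    _ ≤ n * (2 * starD d n x) / 2 := by gcongr
    _ = starD d n x * n := by ring

theorem missing_face_point (d n : ℕ) (hd : 2 ≤ d) (hn : 2 * Real.exp 1 * d ^ 2 ≤ n)
    (x : Fin n → Fin d → ℝ) (hx : ∀ k j, x k j ∈ Set.Icc (0:ℝ) 1)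
    (j : Fin d)
    (hno : ¬ ∃ k : Fin n, x k j > 1 - 1/(d:ℝ) ∧ ∀ i : Fin d, i ≠ j → x k i ≤ 1 - 1/(d:ℝ)) :
    starD d n x ≥ (d : ℝ) / n :=
  missing_face_point_general d n hn x hx j hno
end

section
/- Define N(n,d) as the maximum over all point sets x_1,…,x_n ∈ [0,1]^d of the number of distinct subsets of {x_1,…,x_n} of the form A ∩ {x_1,…,x_n} where A ranges over anchored axis-parallel boxes [0,a_1]×…×[0,a_d] ⊆ [0,1]^d. Then for all n, d ≥ 2, N(n,d) ≤ N(n−1,d) + N(n−1,d−1). -/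
open scoped Classical

/-- `Nmax n d` : maximal number of distinct subsets cut out by anchored boxes
from an `n`-point set in `[0,1]^d`. -/
noncomputable def Nmax (n d : ℕ) : ℕ :=
  sSup {m : ℕ | ∃ x : Fin n → Fin d → ℝ,
    (∀ k j, x k j ∈ Set.Icc (0:ℝ) 1) ∧ m = interCount d n x}

lemma family_finite (d n : ℕ) (x : Fin n → Fin d → ℝ) :
    {P : Set (Fin d → ℝ) | ∃ a : Fin d → ℝ,
      (∀ j, a j ∈ Set.Icc (0:ℝ) 1) ∧ P = anchoredBox d a ∩ Set.range x}.Finite := by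
  apply Set.Finite.subset (Set.finite_range x).finite_subsets
  rintro P ⟨a, -, rfl⟩
  exact Set.inter_subset_right

lemma interCount_le (d n : ℕ) (x : Fin n → Fin d → ℝ) :
    interCount d n x ≤ Nat.card (Set (Fin n)) := by
  have h := Set.ncard_le_ncard_of_injOn (s := {P : Set (Fin d → ℝ) | ∃ a : Fin d → ℝ,
        (∀ j, a j ∈ Set.Icc (0:ℝ) 1) ∧ P = anchoredBox d a ∩ Set.range x})
      (t := (Set.univ : Set (Set (Fin n)))) (fun P => x ⁻¹' P)
      (fun P _ => Set.mem_univ _) ?_ Set.finite_univ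
  · rw [Set.ncard_univ] at h
    exact h
  · rintro P ⟨a, -, rfl⟩ Q ⟨b, -, rfl⟩ h
    have hP : anchoredBox d a ∩ Set.range x ⊆ Set.range x := Set.inter_subset_right
    have hQ : anchoredBox d b ∩ Set.range x ⊆ Set.range x := Set.inter_subset_right
    simp only at h
    rw [← Set.image_preimage_eq_of_subset hP, ← Set.image_preimage_eq_of_subset hQ, h]

lemma le_Nmax (d n : ℕ) (x : Fin n → Fin d → ℝ)
    (hx : ∀ k j, x k j ∈ Set.Icc (0:ℝ) 1) : interCount d n x ≤ Nmax n d := by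
  refine le_csSup ⟨Nat.card (Set (Fin n)), ?_⟩ ⟨x, hx, rfl⟩
  rintro t ⟨z, -, rfl⟩
  exact interCount_le d n z

lemma core (m e : ℕ) (x : Fin (m + 2) → Fin (e + 2) → ℝ)
    (hx : ∀ k j, x k j ∈ Set.Icc (0:ℝ) 1) :
    interCount (e + 2) (m + 2) x ≤ Nmax (m + 1) (e + 2) + Nmax (m + 1) (e + 1) := by
  obtain ⟨k0, -, hmax⟩ :=
    Finset.exists_max_image Finset.univ (fun k => x k 0) ⟨0, Finset.mem_univ _⟩
  simp only [Finset.mem_univ, forall_const] at hmax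
  set x' : Fin (m + 1) → Fin (e + 2) → ℝ := fun k => x (k0.succAbove k) with hx'def
  set π : (Fin (e + 2) → ℝ) → Fin (e + 1) → ℝ := fun p j => p j.succ with hπ
  set y : Fin (m + 1) → Fin (e + 1) → ℝ := fun k => π (x' k) with hy
  have memBox : ∀ (a : Fin (e + 2) → ℝ) (p : Fin (e + 2) → ℝ),
      p ∈ anchoredBox (e + 2) a ↔
        ((0 ≤ p 0 ∧ p 0 ≤ a 0) ∧ π p ∈ anchoredBox (e + 1) (π a)) := by
    intro a p
    simp only [anchoredBox, Set.mem_setOf_eq, hπ]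
    constructor
    · intro h; exact ⟨h 0, fun j => h j.succ⟩
    · rintro ⟨h0, h1⟩ j
      refine Fin.cases ?_ ?_ j
      · exact h0
      · exact h1
  set F : Set (Set (Fin (e + 2) → ℝ)) := {P | ∃ a : Fin (e + 2) → ℝ,
      (∀ j, a j ∈ Set.Icc (0:ℝ) 1) ∧ P = anchoredBox (e + 2) a ∩ Set.range x} with hF
  set F0 : Set (Set (Fin (e + 2) → ℝ)) := {P | P ∈ F ∧ x k0 ∉ P} with hF0
  set F1 : Set (Set (Fin (e + 2) → ℝ)) := {P | P ∈ F ∧ x k0 ∈ P} with hF1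
  have hunion : F = F0 ∪ F1 := by
    ext P
    by_cases h : x k0 ∈ P <;> simp [hF0, hF1, h] <;> tauto
  have h0 : F0.ncard ≤ interCount (e + 2) (m + 1) x' := by
    apply Set.ncard_le_ncard ?_ (family_finite _ _ x')
    rintro P ⟨⟨a, ha, rfl⟩, hP⟩
    refine ⟨a, ha, ?_⟩
    have hk0box : x k0 ∉ anchoredBox (e + 2) a := fun h => hP ⟨h, ⟨k0, rfl⟩⟩
    ext p
    simp only [Set.mem_inter_iff]
    constructor
    · rintro ⟨hpbox, k, rfl⟩
      refine ⟨hpbox, ?_⟩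
      have hk : k ≠ k0 := by rintro rfl; exact hk0box hpbox
      obtain ⟨i, hi⟩ := Fin.exists_succAbove_eq hk
      exact ⟨i, by rw [hx'def]; simp [hi]⟩
    · rintro ⟨hpbox, i, rfl⟩
      exact ⟨hpbox, ⟨k0.succAbove i, rfl⟩⟩
  have hrecon : ∀ P ∈ F1,
      P = {x k0} ∪ {p | (∃ k, x k = p) ∧ π p ∈ π '' P ∩ Set.range y} := by
    rintro P ⟨⟨a, ha, rfl⟩, hk0P⟩
    have hk0box : x k0 ∈ anchoredBox (e + 2) a := hk0P.1
    ext p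
    simp only [Set.mem_union, Set.mem_singleton_iff, Set.mem_setOf_eq, Set.mem_inter_iff,
      Set.mem_image]
    constructor
    · rintro ⟨hpbox, k, rfl⟩
      by_cases hk : k = k0
      · left; rw [hk]
      · right
        refine ⟨⟨k, rfl⟩, ⟨x k, ⟨hpbox, k, rfl⟩, rfl⟩, ?_⟩
        obtain ⟨i, hi⟩ := Fin.exists_succAbove_eq hk
        exact ⟨i, by rw [hy, hx'def]; simp [hi]⟩
    · rintro (rfl | ⟨⟨k, rfl⟩, ⟨p', hp'P, hπp⟩, -⟩)
      · exact hk0P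
      · refine ⟨?_, k, rfl⟩
        rw [memBox]
        refine ⟨⟨(hx k 0).1, le_trans (hmax k) ((memBox a (x k0)).1 hk0box).1.2⟩, ?_⟩
        rw [← hπp]
        exact ((memBox a p').1 hp'P.1).2
  have h1 : F1.ncard ≤ interCount (e + 1) (m + 1) y := by
    apply Set.ncard_le_ncard_of_injOn (fun P => π '' P ∩ Set.range y) ?_ ?_
      (family_finite _ _ y)
    · rintro P ⟨⟨a, ha, rfl⟩, hk0P⟩
      have hk0box : x k0 ∈ anchoredBox (e + 2) a := hk0P.1
      refine ⟨π a, fun j => ha j.succ, ?_⟩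
      ext q
      simp only [Set.mem_inter_iff, Set.mem_image, and_congr_left_iff]
      intro hq
      constructor
      · rintro ⟨p, hpP, rfl⟩
        exact ((memBox a p).1 hpP.1).2
      · intro hqbox
        obtain ⟨i, rfl⟩ := hq
        refine ⟨x' i, ⟨?_, ⟨k0.succAbove i, rfl⟩⟩, rfl⟩
        rw [memBox]
        exact ⟨⟨(hx _ 0).1, le_trans (hmax _) ((memBox a (x k0)).1 hk0box).1.2⟩, hqbox⟩
    · intro P hP Q hQ h
      rw [hrecon P hP, hrecon Q hQ]
      simp only at h
      rw [h]
  have hx' : ∀ k j, x' k j ∈ Set.Icc (0:ℝ) 1 := fun k j => hx _ _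
  have hyIcc : ∀ k j, y k j ∈ Set.Icc (0:ℝ) 1 := fun k j => hx _ _
  calc interCount (e + 2) (m + 2) x = F.ncard := rfl
    _ ≤ F0.ncard + F1.ncard := by rw [hunion]; exact Set.ncard_union_le _ _
    _ ≤ interCount (e + 2) (m + 1) x' + interCount (e + 1) (m + 1) y := add_le_add h0 h1
    _ ≤ Nmax (m + 1) (e + 2) + Nmax (m + 1) (e + 1) :=
        add_le_add (le_Nmax _ _ _ hx') (le_Nmax _ _ _ hyIcc)

theorem sauer_recursion (n d : ℕ) (hn : 2 ≤ n) (hd : 2 ≤ d) :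
    Nmax n d ≤ Nmax (n - 1) d + Nmax (n - 1) (d - 1) := by
  obtain ⟨m, rfl⟩ : ∃ m, n = m + 2 := ⟨n - 2, by omega⟩
  obtain ⟨e, rfl⟩ : ∃ e, d = e + 2 := ⟨d - 2, by omega⟩
  refine csSup_le' ?_
  rintro t ⟨x, hx, rfl⟩
  exact core m e x hx
end

section
/- Let y_1,…,y_m be points in [0,1]^s such that no anchored axis-parallel box in [0,1]^s contains at least r of them on its right upper boundary, with r < s and m ≥ 1. Then there exists a point y_i that has at least two maximal coordinates, i.e., there exist two distinct coordinates j, k such that y_i^{(j)} ≥ y_h^{(j)} and y_i^{(k)} ≥ y_h^{(k)} for all h = 1,…,m. -/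
open scoped Classical

theorem exists_double_maximal (s m r : ℕ) (hr : r < s) (hm : 1 ≤ m)
    (y : Fin m → Fin s → ℝ) (hy : ∀ k j, y k j ∈ Set.Icc (0:ℝ) 1)
    (hP : ∀ a : Fin s → ℝ, (∀ j, a j ∈ Set.Icc (0:ℝ) 1) →
      boundaryCount s m y a < r) :
    ∃ i : Fin m, ∃ j k : Fin s, j ≠ k ∧
      (∀ h : Fin m, y h j ≤ y i j) ∧ (∀ h : Fin m, y h k ≤ y i k) := by

  have hne : (Finset.univ : Finset (Fin m)).Nonempty := by
    simpa [Finset.univ_nonempty_iff] using Fin.pos_iff_nonempty.mp hm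
  set a : Fin s → ℝ := fun j => Finset.univ.sup' hne (fun h => y h j) with ha
  have haj : ∀ j h, y h j ≤ a j := fun j h => Finset.le_sup' (fun h => y h j) (Finset.mem_univ h)
  have haIcc : ∀ j, a j ∈ Set.Icc (0:ℝ) 1 := by
    intro j
    obtain ⟨h0, hh0, hmax⟩ := Finset.exists_mem_eq_sup' hne (fun h => y h j)
    constructor
    · rw [ha]; simp only []; rw [hmax]; exact (hy h0 j).1
    · rw [ha]; simp only []; rw [hmax]; exact (hy h0 j).2
  -- witness function
  have hwit : ∀ j : Fin s, ∃ i : Fin m, y i j = a j := by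
    intro j
    obtain ⟨h0, _, hmax⟩ := Finset.exists_mem_eq_sup' hne (fun h => y h j)
    exact ⟨h0, hmax.symm⟩
  choose f hf using hwit
  set T : Finset (Fin m) :=
    Finset.univ.filter (fun k => y k ∈ anchoredBox s a ∧ ∃ j, y k j = a j) with hT
  have hmaps : ∀ j : Fin s, j ∈ (Finset.univ : Finset (Fin s)) → f j ∈ T := by
    intro j _
    simp only [hT, Finset.mem_filter, Finset.mem_univ, true_and]
    exact ⟨fun j' => ⟨(hy (f j) j').1, haj j' (f j)⟩, ⟨j, hf j⟩⟩
  have hcard : T.card < (Finset.univ : Finset (Fin s)).card := by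
    have := hP a haIcc
    rw [boundaryCount] at this
    simpa using lt_trans this hr
  obtain ⟨j, _, k, _, hjk, hfjk⟩ :=
    Finset.exists_ne_map_eq_of_card_lt_of_maps_to hcard hmaps
  refine ⟨f j, j, k, hjk, ?_, ?_⟩
  · intro h; rw [hf j]; exact haj j h
  · intro h; rw [hfjk, hf k]; exact haj k h
end

section
/- Define Ñ(m,s,r) as the maximum, over all point sets y_1,…,y_m ∈ [0,1]^s with property P(r) (no anchored box has ≥ r of the points on its right upper boundary), of the number of distinct sets A ∩ {y_1,…,y_m} as A ranges over anchored boxes in [0,1]^s. Then for r < s and m ≥ 2, Ñ(m,s,r) ≤ Ñ(m−1,s,r) + Ñ(m−1,s−2,r). -/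
open scoped Classical

/-- `hatN m s r` : maximal number of distinct subsets cut out by anchored boxes from an
`m`-point set in `[0,1]^s` having property `P(r)` (no anchored box has at least `r` of the
points on its right upper boundary). -/
noncomputable def hatN (m s r : ℕ) : ℕ :=
  sSup {c : ℕ | ∃ y : Fin m → Fin s → ℝ,
    (∀ k j, y k j ∈ Set.Icc (0:ℝ) 1) ∧
    (∀ a : Fin s → ℝ, (∀ j, a j ∈ Set.Icc (0:ℝ) 1) → boundaryCount s m y a < r) ∧
    c = interCount s m y}

/-!
Let `z` be a point of the set that is largest in two distinct coordinates `j₁, j₂`; it exists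
by pigeonhole, because the `s` coordinatewise maxima all lie on the right upper boundary of the
box spanned by them, which holds fewer than `r < s` points. The traces of boxes that miss `z`
are traces on the set without `z`. If a box `[0,a]` contains `z`, then the constraints in
coordinates `j₁, j₂` hold for every other point, so the trace minus `z` is cut out by the box
in the remaining `s - 2` coordinates and is determined by its projection there.
-/

open Set Function

/-- Property `P(r)` of the paper. -/
def HasPropertyP (r : ℕ) {d n : ℕ} (x : Fin n → Fin d → ℝ) : Prop :=
  ∀ a : Fin d → ℝ, (∀ j, a j ∈ Icc (0:ℝ) 1) → boundaryCount d n x a < r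

def boxTraces (d : ℕ) (X : Set (Fin d → ℝ)) : Set (Set (Fin d → ℝ)) :=
  {P | ∃ a : Fin d → ℝ, (∀ j, a j ∈ Icc (0:ℝ) 1) ∧ P = anchoredBox d a ∩ X}

lemma interCount_eq_ncard_boxTraces (d n : ℕ) (x : Fin n → Fin d → ℝ) :
    interCount d n x = (boxTraces d (range x)).ncard := rfl

lemma boxTraces_subset_powerset (d : ℕ) (X : Set (Fin d → ℝ)) : boxTraces d X ⊆ 𝒫 X := by
  rintro P ⟨a, -, rfl⟩
  exact inter_subset_right

lemma Set.Finite.boxTraces {d : ℕ} {X : Set (Fin d → ℝ)} (hX : X.Finite) : (boxTraces d X).Finite :=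
  hX.finite_subsets.subset (boxTraces_subset_powerset d X)

lemma interCount_le_two_pow (d n : ℕ) (x : Fin n → Fin d → ℝ) : interCount d n x ≤ 2 ^ n := by
  calc interCount d n x ≤ (univ : Set (Set (Fin n))).ncard := by
        refine ncard_le_ncard_of_injOn (x ⁻¹' ·) (fun _ _ => mem_univ _) ?_ (toFinite _)
        intro P hP Q hQ hPQ
        rw [← image_preimage_eq_of_subset (boxTraces_subset_powerset d _ hP),
          ← image_preimage_eq_of_subset (boxTraces_subset_powerset d _ hQ)]
        exact congrArg (x '' ·) hPQ
    _ = 2 ^ n := by rw [ncard_univ, Nat.card_eq_fintype_card, Fintype.card_set, Fintype.card_fin]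

lemma interCount_le_hatN {r d n : ℕ} {x : Fin n → Fin d → ℝ} (hx : ∀ k j, x k j ∈ Icc (0:ℝ) 1)
    (hP : HasPropertyP r x) : interCount d n x ≤ hatN n d r :=
  le_csSup ⟨2 ^ n, by rintro c ⟨y, -, -, rfl⟩; exact interCount_le_two_pow d n y⟩ ⟨x, hx, hP, rfl⟩

lemma HasPropertyP.comp {r d d' n n' : ℕ} {y : Fin n → Fin d → ℝ}
    (hy : ∀ k j, y k j ∈ Icc (0:ℝ) 1) (hP : HasPropertyP r y)
    {e : Fin n' → Fin n} (he : Injective e) {ε : Fin d' → Fin d} (hε : Injective ε) :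
    HasPropertyP r (fun k i => y (e k) (ε i)) := by
  intro c hc
  set a : Fin d → ℝ := extend ε c fun _ => 1
  have ha_comp : ∀ i, a (ε i) = c i := hε.extend_apply c _
  have ha_of_notMem : ∀ j, j ∉ range ε → a j = 1 := fun j hj => extend_apply' c _ j hj
  have ha : ∀ j, a j ∈ Icc (0:ℝ) 1 := by
    intro j
    by_cases hj : j ∈ range ε
    · obtain ⟨i, rfl⟩ := hj
      rw [ha_comp]; exact hc i
    · rw [ha_of_notMem j hj]; exact right_mem_Icc.mpr zero_le_one
  refine lt_of_le_of_lt (Finset.card_le_card_of_injOn e ?_ he.injOn) (hP a ha)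
  intro k hk
  simp only [Finset.coe_filter, Finset.mem_univ, true_and, mem_ofPred_eq] at hk ⊢
  obtain ⟨hbox, i, hi⟩ := hk
  refine ⟨fun j => ⟨(hy _ j).1, ?_⟩, ε i, by rw [ha_comp]; exact hi⟩
  by_cases hj : j ∈ range ε
  · obtain ⟨i, rfl⟩ := hj
    rw [ha_comp]; exact (hbox i).2
  · rw [ha_of_notMem j hj]; exact (hy _ j).2

lemma exists_point_max_in_two_coords {r s m : ℕ} [Nonempty (Fin m)] {y : Fin m → Fin s → ℝ}
    (hy : ∀ k j, y k j ∈ Icc (0:ℝ) 1) (hP : HasPropertyP r y) (hrs : r ≤ s) :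
    ∃ k₀ j₁ j₂, j₁ ≠ j₂ ∧ (∀ k, y k j₁ ≤ y k₀ j₁) ∧ (∀ k, y k j₂ ≤ y k₀ j₂) := by
  set b : Fin s → ℝ := fun j => Finset.univ.sup' Finset.univ_nonempty (y · j)
  have hle_b : ∀ k j, y k j ≤ b j := fun k j => Finset.le_sup' (y · j) (Finset.mem_univ k)
  have hb : ∀ j, b j ∈ Icc (0:ℝ) 1 := fun j =>
    ⟨(hy (Classical.arbitrary _) j).1.trans (hle_b _ j), Finset.sup'_le _ _ fun k _ => (hy k j).2⟩
  have hmax : ∀ j, ∃ k, y k j = b j := fun j => by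
    obtain ⟨k, -, hk⟩ := Finset.exists_mem_eq_sup' Finset.univ_nonempty (y · j)
    exact ⟨k, hk.symm⟩
  choose g hg using hmax
  have hg_boundary : MapsTo g (Finset.univ : Finset (Fin s))
      (Finset.univ.filter fun k => y k ∈ anchoredBox s b ∧ ∃ j, y k j = b j) := by
    intro j _
    simp only [Finset.coe_filter, Finset.mem_univ, true_and, mem_ofPred_eq]
    exact ⟨fun j' => ⟨(hy _ j').1, hle_b _ j'⟩, j, hg j⟩
  have hcard : boundaryCount s m y b < (Finset.univ : Finset (Fin s)).card := by
    simpa using (hP b hb).trans_le hrs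
  obtain ⟨j₁, -, j₂, -, hne, hgj⟩ := Finset.exists_ne_map_eq_of_card_lt_of_maps_to hcard hg_boundary
  refine ⟨g j₁, j₁, j₂, hne, fun k => ?_, fun k => ?_⟩
  · rw [hg]; exact hle_b k j₁
  · rw [hgj, hg]; exact hle_b k j₂

lemma exists_injective_range_eq_compl_pair {s : ℕ} {j₁ j₂ : Fin s} (hne : j₁ ≠ j₂) :
    ∃ ε : Fin (s - 2) → Fin s, Injective ε ∧ range ε = {j₁, j₂}ᶜ := by
  have hcard : ({j₁, j₂}ᶜ : Finset (Fin s)).card = s - 2 := by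
    rw [Finset.card_compl, Finset.card_pair hne, Fintype.card_fin]
  refine ⟨_, (Finset.orderEmbOfFin _ hcard).injective, ?_⟩
  rw [Finset.range_orderEmbOfFin, Finset.coe_compl, Finset.coe_pair]

lemma range_eq_insert_range_comp_succAbove {α : Type*} {n : ℕ} (y : Fin (n + 1) → α)
    (k₀ : Fin (n + 1)) : range y = insert (y k₀) (range (y ∘ k₀.succAbove)) := by
  rw [range_comp, Fin.range_succAbove, ← image_insert_eq, insert_eq, union_compl_self, image_univ]

section Projection

variable {d d' : ℕ} {ε : Fin d' → Fin d} {z : Fin d → ℝ}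

lemma mem_anchoredBox_iff_comp {u a : Fin d → ℝ} (hz : z ∈ anchoredBox d a)
    (hu : ∀ j ∉ range ε, u j ∈ Icc 0 (z j)) :
    u ∈ anchoredBox d a ↔ u ∘ ε ∈ anchoredBox d' (a ∘ ε) := by
  refine ⟨fun h i => h (ε i), fun h j => ?_⟩
  by_cases hj : j ∈ range ε
  · obtain ⟨i, rfl⟩ := hj
    exact h i
  · exact ⟨(hu j hj).1, (hu j hj).2.trans (hz j).2⟩

lemma ncard_boxTraces_le_sdiff_add_proj {X : Set (Fin d → ℝ)} (hX : X.Finite)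
    (hz : ∀ u ∈ X, ∀ j ∉ range ε, u j ∈ Icc 0 (z j)) :
    (boxTraces d X).ncard ≤
      (boxTraces d (X \ {z})).ncard + (boxTraces d' ((· ∘ ε) '' (X \ {z}))).ncard := by
  set π : (Fin d → ℝ) → (Fin d' → ℝ) := (· ∘ ε)
  have hmiss : boxTraces d X \ {S | z ∈ S} ⊆ boxTraces d (X \ {z}) := by
    rintro S ⟨⟨a, ha, rfl⟩, hzS : z ∉ anchoredBox d a ∩ X⟩
    refine ⟨a, ha, ?_⟩
    rw [← inter_sdiff_assoc, sdiff_singleton_eq_self hzS]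
  have hcut : ∀ a, z ∈ anchoredBox d a →
      (anchoredBox d a ∩ X) \ {z} = (X \ {z}) ∩ π ⁻¹' anchoredBox d' (a ∘ ε) := by
    intro a hza
    ext u
    simp only [mem_sdiff, mem_inter_iff, mem_preimage]
    constructor
    · rintro ⟨⟨hua, huX⟩, huz⟩
      exact ⟨⟨huX, huz⟩, (mem_anchoredBox_iff_comp hza (hz u huX)).mp hua⟩
    · rintro ⟨⟨huX, huz⟩, hua⟩
      exact ⟨⟨(mem_anchoredBox_iff_comp hza (hz u huX)).mpr hua, huX⟩, huz⟩
  have hhit : (boxTraces d X ∩ {S | z ∈ S}).ncard ≤ (boxTraces d' (π '' (X \ {z}))).ncard := by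
    refine ncard_le_ncard_of_injOn (fun S => π '' (S \ {z})) ?_ ?_ (hX.sdiff.image π).boxTraces
    · rintro S ⟨⟨a, ha, rfl⟩, hzS : z ∈ anchoredBox d a ∩ X⟩
      refine ⟨a ∘ ε, fun i => ha (ε i), ?_⟩
      rw [hcut a hzS.1, image_inter_preimage, inter_comm]
    · have hrecover : ∀ S ∈ (boxTraces d X ∩ {S | z ∈ S}),
          S = insert z ((X \ {z}) ∩ π ⁻¹' (π '' (S \ {z}))) := by
        rintro S ⟨⟨a, ha, rfl⟩, hzS : z ∈ anchoredBox d a ∩ X⟩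
        rw [hcut a hzS.1, image_inter_preimage, preimage_inter, ← inter_assoc,
          inter_eq_left.mpr (subset_preimage_image π _), ← hcut a hzS.1, insert_sdiff_singleton,
          insert_eq_of_mem hzS]
      intro S hS S' hS' h
      rw [hrecover S hS, hrecover S' hS']
      simp only at h
      rw [h]
  calc (boxTraces d X).ncard
      = (boxTraces d X \ {S | z ∈ S}).ncard + (boxTraces d X ∩ {S | z ∈ S}).ncard := by
        rw [add_comm, ncard_inter_add_ncard_sdiff_eq_ncard _ _ hX.boxTraces]
    _ ≤ _ := add_le_add (ncard_le_ncard hmiss hX.sdiff.boxTraces) hhit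

end Projection

theorem modified_sauer_recursion (m s r : ℕ) (hr : r < s) (hm : 2 ≤ m) :
    hatN m s r ≤ hatN (m - 1) s r + hatN (m - 1) (s - 2) r := by
  obtain ⟨n, rfl⟩ : ∃ n, m = n + 1 := ⟨m - 1, by omega⟩
  rw [Nat.add_sub_cancel]
  refine csSup_le' ?_
  rintro c ⟨y, hy, hP : HasPropertyP r y, rfl⟩
  obtain ⟨k₀, j₁, j₂, hne, hmax₁, hmax₂⟩ := exists_point_max_in_two_coords hy hP hr.le
  obtain ⟨ε, hε, hε_range⟩ := exists_injective_range_eq_compl_pair hne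
  set y' := y ∘ k₀.succAbove
  have hy' : interCount s n y' ≤ hatN n s r :=
    interCount_le_hatN (fun k j => hy _ j) (hP.comp hy Fin.succAbove_right_injective injective_id)
  have hx' : interCount (s - 2) n (fun k i => y' k (ε i)) ≤ hatN n (s - 2) r :=
    interCount_le_hatN (fun k i => hy _ (ε i)) (hP.comp hy Fin.succAbove_right_injective hε)
  have hrange := range_eq_insert_range_comp_succAbove y k₀
  by_cases hdup : y k₀ ∈ range y'
  · rw [interCount_eq_ncard_boxTraces, hrange, insert_eq_of_mem hdup]
    exact hy'.trans (Nat.le_add_right _ _)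
  have hz : ∀ u ∈ range y, ∀ j ∉ range ε, u j ∈ Icc 0 (y k₀ j) := by
    rintro _ ⟨k, rfl⟩ j hj
    rw [hε_range, notMem_compl_iff, mem_insert_iff, mem_singleton_iff] at hj
    rcases hj with rfl | rfl
    exacts [⟨(hy k _).1, hmax₁ k⟩, ⟨(hy k _).1, hmax₂ k⟩]
  calc interCount s (n + 1) y
      ≤ (boxTraces s (range y \ {y k₀})).ncard
        + (boxTraces (s - 2) ((· ∘ ε) '' (range y \ {y k₀}))).ncard :=
        ncard_boxTraces_le_sdiff_add_proj (finite_range y) hz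
    _ = interCount s n y' + interCount (s - 2) n (fun k i => y' k (ε i)) := by
        rw [hrange, insert_sdiff_self_of_notMem hdup, interCount_eq_ncard_boxTraces,
          interCount_eq_ncard_boxTraces, ← range_comp]
        rfl
    _ ≤ hatN n s r + hatN n (s - 2) r := add_le_add hy' hx'
end

section
/- Let x_1,…,x_n ∈ [0,1]^d with n ≥ d ≥ 1 be a point set with property P(d/4) (no anchored box has at least d/4 of the points on its right upper boundary). Then the number of distinct sets A ∩ {x_1,…,x_n}, A ranging over anchored boxes, is at most 2^d·(e·n/d)^{3d/4}. -/
open scoped Classical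

/-- Binomial sum bound: `∑_{i≤m} C(n,i) ≤ (e n / m)^m`. -/
lemma aux_sum_choose (n m : ℕ) (hm : 1 ≤ m) (hmn : m ≤ n) :
    (∑ i ∈ Finset.range (m+1), (n.choose i : ℝ)) ≤ (Real.exp 1 * n / m) ^ m := by
  have hn0 : (0:ℝ) < n := by exact_mod_cast lt_of_lt_of_le hm hmn
  have hm0 : (0:ℝ) < m := by exact_mod_cast hm
  set t : ℝ := m / n with ht_def
  have ht0 : 0 < t := div_pos hm0 hn0
  have ht1 : t ≤ 1 := by rw [div_le_one hn0]; exact_mod_cast hmn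
  have key : t^m * ∑ i ∈ Finset.range (m+1), (n.choose i : ℝ) ≤ Real.exp 1 ^ m := by
    have h1 : t^m * ∑ i ∈ Finset.range (m+1), (n.choose i : ℝ)
        = ∑ i ∈ Finset.range (m+1), t^m * (n.choose i : ℝ) := Finset.mul_sum _ _ _
    have h2 : ∑ i ∈ Finset.range (m+1), t^m * (n.choose i:ℝ)
        ≤ ∑ i ∈ Finset.range (m+1), t^i * 1^(n-i) * (n.choose i:ℝ) := by
      refine Finset.sum_le_sum fun i hi => ?_
      rw [one_pow, mul_one]
      have hti : t^m ≤ t^i :=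
        pow_le_pow_of_le_one ht0.le ht1 (by have := Finset.mem_range.1 hi; omega)
      exact mul_le_mul_of_nonneg_right hti (Nat.cast_nonneg _)
    have h3 : ∑ i ∈ Finset.range (m+1), t^i * 1^(n-i)*(n.choose i:ℝ)
        ≤ ∑ i ∈ Finset.range (n+1), t^i * 1^(n-i)*(n.choose i:ℝ) := by
      refine Finset.sum_le_sum_of_subset_of_nonneg (Finset.range_subset_range.2 (by omega)) ?_
      intro i _ _; positivity
    have h4 : ∑ i ∈ Finset.range (n+1), t^i*1^(n-i)*(n.choose i:ℝ) = (t+1)^n :=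
      (add_pow t 1 n).symm
    have h5 : (t+1)^n ≤ Real.exp t ^ n :=
      pow_le_pow_left₀ (by positivity) (Real.add_one_le_exp t) n
    have h6 : Real.exp t ^ n = Real.exp 1 ^ m := by
      rw [← Real.exp_nat_mul, ← Real.exp_nat_mul]
      congr 1
      rw [ht_def]
      field_simp
    calc t^m * ∑ i ∈ Finset.range (m+1), (n.choose i : ℝ)
        = ∑ i ∈ Finset.range (m+1), t^m * (n.choose i : ℝ) := h1
      _ ≤ ∑ i ∈ Finset.range (m+1), t^i * 1^(n-i) * (n.choose i:ℝ) := h2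
      _ ≤ ∑ i ∈ Finset.range (n+1), t^i * 1^(n-i) * (n.choose i:ℝ) := h3
      _ = (t+1)^n := h4
      _ ≤ Real.exp t ^ n := h5
      _ = Real.exp 1 ^ m := h6
  have hpow : (0:ℝ) < t^m := pow_pos ht0 m
  have heq : Real.exp 1 * n / m = Real.exp 1 / t := by
    rw [ht_def, div_div_eq_mul_div]
  rw [heq, div_pow, le_div_iff₀ hpow, mul_comm]
  exact key

/-- For `t ≥ 4` we have `t ≤ 2^(t/2)`. -/
lemma aux_rpow (t : ℝ) (ht : 4 ≤ t) : t ≤ (2:ℝ) ^ (t/2) := by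
  have hlog : (1/2 : ℝ) ≤ Real.log 2 := by
    have := Real.log_two_gt_d9; norm_num at this ⊢; linarith
  have h1 : (2:ℝ)^(t/2) = 4 * Real.exp (Real.log 2 * (t/2 - 2)) := by
    rw [Real.rpow_def_of_pos (by norm_num : (0:ℝ) < 2)]
    rw [show Real.log 2 * (t/2) = Real.log 2 * 2 + Real.log 2 * (t/2-2) by ring]
    rw [Real.exp_add]
    congr 1
    rw [show Real.log 2 * 2 = Real.log 4 by
      rw [show (4:ℝ) = 2^(2:ℕ) by norm_num, Real.log_pow]; push_cast; ring]
    exact Real.exp_log (by norm_num)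
  rw [h1]
  have hs : (0:ℝ) ≤ t/2 - 2 := by linarith
  have h2 : Real.log 2 * (t/2-2) + 1 ≤ Real.exp (Real.log 2 * (t/2-2)) :=
    Real.add_one_le_exp _
  nlinarith [mul_le_mul_of_nonneg_right hlog hs]

theorem strengthened_sauer (d n : ℕ) (hd : 1 ≤ d) (hdn : d ≤ n)
    (x : Fin n → Fin d → ℝ) (hx : ∀ k j, x k j ∈ Set.Icc (0:ℝ) 1)
    (hP : ¬ ∃ a : Fin d → ℝ, (∀ j, a j ∈ Set.Icc (0:ℝ) 1) ∧
      (d : ℝ) / 4 ≤ (boundaryCount d n x a : ℝ)) :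
    (interCount d n x : ℝ) ≤ 2 ^ d * (Real.exp 1 * n / d) ^ ((3 * (d : ℝ)) / 4) := by
  classical
  have hn0 : 0 < n := lt_of_lt_of_le hd hdn
  -- small dimension : hypothesis hP is contradictory
  by_cases hd4 : d ≤ 4
  · exfalso
    apply hP
    refine ⟨x ⟨0, hn0⟩, fun j => hx _ j, ?_⟩
    have h1 : 1 ≤ boundaryCount d n x (x ⟨0, hn0⟩) := by
      unfold boundaryCount
      refine Finset.card_pos.2 ⟨⟨0, hn0⟩, Finset.mem_filter.2 ⟨Finset.mem_univ _, ?_, ?_⟩⟩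
      · exact fun j => ⟨(hx _ j).1, le_refl _⟩
      · exact ⟨⟨0, hd⟩, rfl⟩
    have h1' : (1:ℝ) ≤ (boundaryCount d n x (x ⟨0, hn0⟩) : ℝ) := by exact_mod_cast h1
    have hd4' : (d:ℝ) ≤ 4 := by exact_mod_cast hd4
    linarith
  push_neg at hd4
  set m := (d-1)/4 with hm_def
  have hm1 : 1 ≤ m := by omega
  have hmn : m ≤ n := by omega
  -- the family of index sets cut out by anchored boxes
  set 𝒜 : Finset (Finset (Fin n)) := Finset.univ.filter (fun T : Finset (Fin n) =>
    ∃ a : Fin d → ℝ, (∀ j, a j ∈ Set.Icc (0:ℝ) 1) ∧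
      T = Finset.univ.filter (fun k => x k ∈ anchoredBox d a)) with h𝒜
  -- Step 1 : interCount ≤ 𝒜.card
  have step1 : interCount d n x ≤ 𝒜.card := by
    unfold interCount
    set S := {P : Set (Fin d → ℝ) | ∃ a : Fin d → ℝ,
      (∀ j, a j ∈ Set.Icc (0:ℝ) 1) ∧ P = anchoredBox d a ∩ Set.range x} with hS
    set f : Set (Fin d → ℝ) → Finset (Fin n) :=
      fun P => Finset.univ.filter (fun k => x k ∈ P) with hf
    have hfmem : ∀ (P : Set (Fin d → ℝ)) (k : Fin n), k ∈ f P ↔ x k ∈ P := by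
      intro P k
      rw [hf]
      simp
    have hinj : Set.InjOn f S := by
      intro P hP1 Q hQ1 hfPQ
      obtain ⟨a, -, rfl⟩ := hP1
      obtain ⟨b, -, rfl⟩ := hQ1
      ext y
      constructor
      · rintro ⟨hy1, k, rfl⟩
        have hk : k ∈ f (anchoredBox d a ∩ Set.range x) :=
          (hfmem _ k).2 ⟨hy1, k, rfl⟩
        rw [hfPQ] at hk
        exact (hfmem _ k).1 hk
      · rintro ⟨hy1, k, rfl⟩
        have hk : k ∈ f (anchoredBox d b ∩ Set.range x) :=
          (hfmem _ k).2 ⟨hy1, k, rfl⟩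
        rw [← hfPQ] at hk
        exact (hfmem _ k).1 hk
    have himg : f '' S ⊆ ↑𝒜 := by
      rintro T ⟨P, ⟨a, ha, rfl⟩, rfl⟩
      rw [h𝒜]
      simp only [Finset.coe_filter, Finset.mem_univ, true_and, Set.mem_setOf_eq]
      refine ⟨a, ha, ?_⟩
      ext k
      rw [hfmem]
      simp only [Finset.mem_filter, Finset.mem_univ, true_and, Set.mem_inter_iff,
        Set.mem_range]
      exact ⟨fun h => h.1, fun h => ⟨h, k, rfl⟩⟩
    calc S.ncard = (f '' S).ncard := (Set.ncard_image_of_injOn hinj).symm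
      _ ≤ (↑𝒜 : Set (Finset (Fin n))).ncard :=
          Set.ncard_le_ncard himg (Finset.finite_toSet _)
      _ = 𝒜.card := Set.ncard_coe_finset _
  -- Step 2 : shattered sets are small
  have step2 : ∀ T ∈ 𝒜.shatterer, T.card ≤ m := by
    intro T hT
    rw [Finset.mem_shatterer] at hT
    rcases T.eq_empty_or_nonempty with rfl | hne
    · simp
    have key : ∀ k ∈ T, ∃ j, ∀ t ∈ T, t ≠ k → x t j < x k j := by
      intro k hk
      obtain ⟨A, hA, hTA⟩ := hT (Finset.erase_subset k T)
      rw [h𝒜, Finset.mem_filter] at hA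
      obtain ⟨-, a, ha, rfl⟩ := hA
      have hkA : x k ∉ anchoredBox d a := by
        intro hmem
        have hkin : k ∈ T ∩ Finset.univ.filter (fun k => x k ∈ anchoredBox d a) :=
          Finset.mem_inter.2 ⟨hk, Finset.mem_filter.2 ⟨Finset.mem_univ _, hmem⟩⟩
        rw [hTA] at hkin
        exact (Finset.mem_erase.1 hkin).1 rfl
      simp only [anchoredBox, Set.mem_setOf_eq, not_forall] at hkA
      obtain ⟨j, hj⟩ := hkA
      have haj : a j < x k j := by
        by_contra hcon
        push_neg at hcon
        exact hj ⟨(hx k j).1, hcon⟩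
      refine ⟨j, fun t ht htk => ?_⟩
      have htin : t ∈ T ∩ Finset.univ.filter (fun k => x k ∈ anchoredBox d a) := by
        rw [hTA]; exact Finset.mem_erase.2 ⟨htk, ht⟩
      have hmem := (Finset.mem_filter.1 (Finset.mem_inter.1 htin).2).2
      exact lt_of_le_of_lt (hmem j).2 haj
    choose g hg using key
    set a : Fin d → ℝ := fun j => T.sup' hne (fun k => x k j) with ha_def
    have haIcc : ∀ j, a j ∈ Set.Icc (0:ℝ) 1 := by
      intro j
      obtain ⟨k, hk⟩ := hne
      exact ⟨le_trans (hx k j).1 (Finset.le_sup' (fun t => x t j) hk),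
        Finset.sup'_le _ _ fun t _ => (hx t j).2⟩
    have hsub : T ⊆ Finset.univ.filter
        (fun k => x k ∈ anchoredBox d a ∧ ∃ j, x k j = a j) := by
      intro k hk
      refine Finset.mem_filter.2 ⟨Finset.mem_univ _,
        fun j => ⟨(hx k j).1, Finset.le_sup' (fun t => x t j) hk⟩, ⟨g k hk, ?_⟩⟩
      refine le_antisymm (Finset.le_sup' (fun t => x t (g k hk)) hk)
        (Finset.sup'_le _ _ fun s hs => ?_)
      rcases eq_or_ne s k with rfl | hne'
      · exact le_refl _
      · exact (hg k hk s hs hne').le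
    have hbc : T.card ≤ boundaryCount d n x a := by
      unfold boundaryCount
      exact Finset.card_le_card hsub
    by_contra hcon
    push_neg at hcon
    apply hP
    refine ⟨a, haIcc, ?_⟩
    have hd4T : d ≤ 4 * T.card := by omega
    have h1 : (d:ℝ)/4 ≤ (T.card : ℝ) := by
      have : (d:ℝ) ≤ 4 * T.card := by exact_mod_cast hd4T
      linarith
    have h2 : (T.card : ℝ) ≤ (boundaryCount d n x a : ℝ) := by exact_mod_cast hbc
    linarith
  -- Step 3 : Sauer–Shelah + counting small sets
  have step3 : 𝒜.card ≤ ∑ i ∈ Finset.range (m+1), n.choose i := by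
    refine le_trans (Finset.card_le_card_shatterer 𝒜) ?_
    have hsub : 𝒜.shatterer ⊆ (Finset.range (m+1)).biUnion
        (fun i => Finset.powersetCard i (Finset.univ : Finset (Fin n))) := by
      intro T hT
      refine Finset.mem_biUnion.2 ⟨T.card, Finset.mem_range.2 (by
        have := step2 T hT; omega), ?_⟩
      exact Finset.mem_powersetCard.2 ⟨Finset.subset_univ _, rfl⟩
    refine le_trans (Finset.card_le_card hsub) ?_
    refine le_trans (Finset.card_biUnion_le) (le_of_eq ?_)
    refine Finset.sum_congr rfl fun i _ => ?_
    rw [Finset.card_powersetCard, Finset.card_univ, Fintype.card_fin]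
  -- Step 4 : analytic bound
  have hm1' : (1:ℝ) ≤ m := by exact_mod_cast hm1
  have hm0 : (0:ℝ) < m := by linarith
  have hd0 : (0:ℝ) < d := by exact_mod_cast hd
  have hn0' : (0:ℝ) < n := by exact_mod_cast hn0
  have hdn' : (d:ℝ) ≤ n := by exact_mod_cast hdn
  have hexp1 : (2:ℝ) ≤ Real.exp 1 := by
    have := Real.add_one_le_exp 1; linarith
  have hbase1 : 1 ≤ Real.exp 1 * n / d := by
    rw [le_div_iff₀ hd0, one_mul]
    nlinarith
  have h4m : 4 * m ≤ d := by omega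
  have h4m' : (4:ℝ) * m ≤ d := by exact_mod_cast h4m
  have hA : (Real.exp 1 * n / d)^m ≤ (Real.exp 1 * n / d) ^ ((3 * (d:ℝ))/4) := by
    rw [← Real.rpow_natCast (Real.exp 1 * n / d) m]
    exact Real.rpow_le_rpow_of_exponent_le hbase1 (by linarith)
  have hB : ((d:ℝ)/m)^m ≤ (2:ℝ)^d := by
    have h4 : (4:ℝ) ≤ (d:ℝ)/m := by
      rw [le_div_iff₀ hm0]; linarith
    have hb := aux_rpow ((d:ℝ)/m) h4
    calc ((d:ℝ)/m)^m ≤ ((2:ℝ) ^ (((d:ℝ)/m)/2))^m :=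
          pow_le_pow_left₀ (by positivity) hb m
      _ = (2:ℝ) ^ ((((d:ℝ)/m)/2) * m) := by
          rw [← Real.rpow_natCast ((2:ℝ) ^ (((d:ℝ)/m)/2)) m, ← Real.rpow_mul (by norm_num)]
      _ = (2:ℝ) ^ ((d:ℝ)/2) := by
          congr 1
          field_simp
      _ ≤ (2:ℝ) ^ ((d:ℝ)) := Real.rpow_le_rpow_of_exponent_le one_le_two (by linarith)
      _ = (2:ℝ)^d := Real.rpow_natCast 2 d
  have hsplit : (Real.exp 1 * n / m)^m = (Real.exp 1 * n / d)^m * ((d:ℝ)/m)^m := by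
    rw [← mul_pow]
    congr 1
    field_simp
  calc (interCount d n x : ℝ)
      ≤ ∑ i ∈ Finset.range (m+1), (n.choose i : ℝ) := by
        exact_mod_cast step1.trans step3
    _ ≤ (Real.exp 1 * n / m)^m := aux_sum_choose n m hm1 hmn
    _ = (Real.exp 1 * n / d)^m * ((d:ℝ)/m)^m := hsplit
    _ ≤ (Real.exp 1 * n / d) ^ ((3 * (d:ℝ))/4) * (2:ℝ)^d := by
        refine mul_le_mul hA hB (by positivity) ?_
        exact Real.rpow_nonneg (by positivity) _
    _ = 2 ^ d * (Real.exp 1 * n / d) ^ ((3 * (d:ℝ))/4) := mul_comm _ _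
end

section
/- If C_1 and C_2 are anchored axis-parallel boxes in [0,1]^d containing exactly the same points of a point set x_1,…,x_n, and the volume of the symmetric difference C_1 Δ C_2 is at least ε, then D_n^*(x_1,…,x_n) ≥ ε/4. -/
open scoped Classical

lemma box_eq_pi (d : ℕ) (a : Fin d → ℝ) :
    anchoredBox d a = Set.pi Set.univ (fun j => Set.Icc 0 (a j)) := by
  ext y; simp [anchoredBox, Set.mem_pi, Pi.le_def, forall_and]

lemma vol_box (d : ℕ) (a : Fin d → ℝ) (ha : ∀ j, 0 ≤ a j) :
    MeasureTheory.volume (anchoredBox d a) = ENNReal.ofReal (∏ j, a j) := by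
  rw [box_eq_pi, MeasureTheory.volume_pi_pi]
  simp only [Real.volume_Icc, sub_zero]
  rw [ENNReal.ofReal_prod_of_nonneg (fun j _ => ha j)]

lemma box_measurable (d : ℕ) (a : Fin d → ℝ) : MeasurableSet (anchoredBox d a) := by
  rw [box_eq_pi]
  exact MeasurableSet.pi Set.countable_univ (fun j _ => measurableSet_Icc)

lemma bdd_starD (d n : ℕ) (x : Fin n → Fin d → ℝ) :
    BddAbove {t : ℝ | ∃ a : Fin d → ℝ, (∀ j, a j ∈ Set.Icc (0:ℝ) 1) ∧
      t = |((Finset.univ.filter (fun k => x k ∈ anchoredBox d a)).card : ℝ) / n - ∏ j, a j|} := by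
  refine ⟨1, ?_⟩
  rintro t ⟨a, ha, rfl⟩
  have h1 : (0:ℝ) ≤ ((Finset.univ.filter (fun k => x k ∈ anchoredBox d a)).card : ℝ) / n :=
    div_nonneg (Nat.cast_nonneg _) (Nat.cast_nonneg _)
  have h2 : ((Finset.univ.filter (fun k => x k ∈ anchoredBox d a)).card : ℝ) / n ≤ 1 := by
    rcases Nat.eq_zero_or_pos n with h | h
    · subst h; simp
    · rw [div_le_one (by exact_mod_cast h)]
      exact_mod_cast (Finset.card_filter_le _ _).trans (by simp)
  have h3 : (0:ℝ) ≤ ∏ j, a j := Finset.prod_nonneg fun j _ => (ha j).1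
  have h4 : (∏ j, a j) ≤ 1 := Finset.prod_le_one (fun j _ => (ha j).1) (fun j _ => (ha j).2)
  rw [abs_sub_le_iff]; constructor <;> linarith

lemma aux_main (d n : ℕ) (ε : ℝ) (x : Fin n → Fin d → ℝ)
    (a c : Fin d → ℝ) (ha : ∀ j, a j ∈ Set.Icc (0:ℝ) 1) (hc : ∀ j, c j ∈ Set.Icc (0:ℝ) 1)
    (hcnt : (Finset.univ.filter (fun k => x k ∈ anchoredBox d a)).card
          = (Finset.univ.filter (fun k => x k ∈ anchoredBox d c)).card)
    (hgap : ε/2 ≤ ∏ j, a j - ∏ j, c j) : ε/4 ≤ starD d n x := by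
  set N : ℝ := ((Finset.univ.filter (fun k => x k ∈ anchoredBox d a)).card : ℝ)
  have t1mem : |N / n - ∏ j, a j| ∈ {t : ℝ | ∃ a' : Fin d → ℝ,
      (∀ j, a' j ∈ Set.Icc (0:ℝ) 1) ∧
      t = |((Finset.univ.filter (fun k => x k ∈ anchoredBox d a')).card : ℝ) / n - ∏ j, a' j|} :=
    ⟨a, ha, rfl⟩
  have t2mem : |N / n - ∏ j, c j| ∈ {t : ℝ | ∃ a' : Fin d → ℝ,
      (∀ j, a' j ∈ Set.Icc (0:ℝ) 1) ∧
      t = |((Finset.univ.filter (fun k => x k ∈ anchoredBox d a')).card : ℝ) / n - ∏ j, a' j|} :=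
    ⟨c, hc, by rw [← hcnt]⟩
  have hbdd := bdd_starD d n x
  have l1 : |N / n - ∏ j, a j| ≤ starD d n x := le_csSup hbdd t1mem
  have l2 : |N / n - ∏ j, c j| ≤ starD d n x := le_csSup hbdd t2mem
  have : ε/2 ≤ |N / n - ∏ j, c j| + |N / n - ∏ j, a j| := by
    have := abs_sub_abs_le_abs_sub (N / n - ∏ j, c j) (N / n - ∏ j, a j)
    have h' : |(N / n - ∏ j, c j) - (N / n - ∏ j, a j)| = |∏ j, a j - ∏ j, c j| := by
      ring_nf
    have := abs_sub (N / n - ∏ j, a j) (N / n - ∏ j, c j)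
    calc ε/2 ≤ ∏ j, a j - ∏ j, c j := hgap
      _ ≤ |∏ j, a j - ∏ j, c j| := le_abs_self _
      _ = |(N / n - ∏ j, c j) - (N / n - ∏ j, a j)| := by ring_nf
      _ ≤ |N / n - ∏ j, c j| + |N / n - ∏ j, a j| := abs_sub _ _
  linarith

theorem symmdiff_boxes_discrepancy (d n : ℕ) (ε : ℝ)
    (x : Fin n → Fin d → ℝ) (hx : ∀ k j, x k j ∈ Set.Icc (0:ℝ) 1)
    (a b : Fin d → ℝ) (ha : ∀ j, a j ∈ Set.Icc (0:ℝ) 1) (hb : ∀ j, b j ∈ Set.Icc (0:ℝ) 1)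
    (hsame : ∀ k, x k ∈ anchoredBox d a ↔ x k ∈ anchoredBox d b)
    (hvol : ε ≤ (MeasureTheory.volume (symmDiff (anchoredBox d a) (anchoredBox d b))).toReal) :
    starD d n x ≥ ε / 4 := by
  set m : Fin d → ℝ := fun j => min (a j) (b j) with hm
  have hm01 : ∀ j, m j ∈ Set.Icc (0:ℝ) 1 :=
    fun j => ⟨le_min (ha j).1 (hb j).1, min_le_of_left_le (ha j).2⟩
  have hboxm : anchoredBox d m = anchoredBox d a ∩ anchoredBox d b := by
    ext y
    simp only [anchoredBox, Set.mem_setOf_eq, Set.mem_inter_iff, hm, le_min_iff]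
    constructor
    · intro h; exact ⟨fun j => ⟨(h j).1, (h j).2.1⟩, fun j => ⟨(h j).1, (h j).2.2⟩⟩
    · intro h j; exact ⟨(h.1 j).1, (h.1 j).2, (h.2 j).2⟩
  have hma : ∀ j, m j ≤ a j := fun j => min_le_left _ _
  have hmb : ∀ j, m j ≤ b j := fun j => min_le_right _ _
  have hga : (0:ℝ) ≤ ∏ j, a j - ∏ j, m j := by
    have := Finset.prod_le_prod (s := Finset.univ) (fun j _ => (hm01 j).1) (fun j _ => hma j)
    linarith
  have hgb : (0:ℝ) ≤ ∏ j, b j - ∏ j, m j := by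
    have := Finset.prod_le_prod (s := Finset.univ) (fun j _ => (hm01 j).1) (fun j _ => hmb j)
    linarith
  -- volume of the differences
  have voldiff : ∀ (u : Fin d → ℝ), (∀ j, u j ∈ Set.Icc (0:ℝ) 1) → (∀ j, m j ≤ u j) →
      MeasureTheory.volume (anchoredBox d u \ anchoredBox d m)
        = ENNReal.ofReal (∏ j, u j - ∏ j, m j) := by
    intro u hu hmu
    have hsub : anchoredBox d m ⊆ anchoredBox d u := by
      intro y hy j; exact ⟨(hy j).1, (hy j).2.trans (hmu j)⟩
    rw [MeasureTheory.measure_diff hsub (box_measurable d m).nullMeasurableSet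
        (by rw [vol_box d m (fun j => (hm01 j).1)]; exact ENNReal.ofReal_ne_top),
      vol_box d u (fun j => (hu j).1), vol_box d m (fun j => (hm01 j).1),
      ← ENNReal.ofReal_sub _ (Finset.prod_nonneg fun j _ => (hm01 j).1)]
  have hsd : symmDiff (anchoredBox d a) (anchoredBox d b)
      ⊆ (anchoredBox d a \ anchoredBox d m) ∪ (anchoredBox d b \ anchoredBox d m) := by
    rw [Set.symmDiff_def, hboxm]
    rintro y (⟨hy1, hy2⟩ | ⟨hy1, hy2⟩)
    · exact Or.inl ⟨hy1, fun h => hy2 h.2⟩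
    · exact Or.inr ⟨hy1, fun h => hy2 h.1⟩
  have hε : ε ≤ (∏ j, a j - ∏ j, m j) + (∏ j, b j - ∏ j, m j) := by
    have h1 : MeasureTheory.volume (symmDiff (anchoredBox d a) (anchoredBox d b))
        ≤ ENNReal.ofReal ((∏ j, a j - ∏ j, m j) + (∏ j, b j - ∏ j, m j)) := by
      calc MeasureTheory.volume (symmDiff (anchoredBox d a) (anchoredBox d b))
          ≤ MeasureTheory.volume ((anchoredBox d a \ anchoredBox d m)
              ∪ (anchoredBox d b \ anchoredBox d m)) := MeasureTheory.measure_mono hsd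
        _ ≤ MeasureTheory.volume (anchoredBox d a \ anchoredBox d m)
              + MeasureTheory.volume (anchoredBox d b \ anchoredBox d m) :=
            MeasureTheory.measure_union_le _ _
        _ = ENNReal.ofReal ((∏ j, a j - ∏ j, m j) + (∏ j, b j - ∏ j, m j)) := by
            rw [voldiff a ha hma, voldiff b hb hmb, ENNReal.ofReal_add hga hgb]
    have h2 := ENNReal.toReal_mono ENNReal.ofReal_ne_top h1
    rw [ENNReal.toReal_ofReal (by linarith)] at h2
    linarith
  -- counts coincide
  have hcntm : (Finset.univ.filter (fun k => x k ∈ anchoredBox d m)).card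
      = (Finset.univ.filter (fun k => x k ∈ anchoredBox d a)).card := by
    congr 1
    apply Finset.filter_congr
    intro k _
    simp only [hboxm, Set.mem_inter_iff, eq_iff_iff]
    constructor
    · exact fun h => h.1
    · exact fun h => ⟨h, (hsame k).1 h⟩
  have hcntb : (Finset.univ.filter (fun k => x k ∈ anchoredBox d b)).card
      = (Finset.univ.filter (fun k => x k ∈ anchoredBox d a)).card := by
    congr 1
    apply Finset.filter_congr
    intro k _
    exact (hsame k).symm
  rcases le_total (∏ j, a j - ∏ j, m j) (∏ j, b j - ∏ j, m j) with h | h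
  · exact aux_main d n ε x b m hb hm01 (by rw [hcntb, ← hcntm]) (by linarith)
  · exact aux_main d n ε x a m ha hm01 hcntm.symm (by linarith)
end
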